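/- Let d₁, d₂ > 0, set d₃ := (d₂/d₁)^{1/2}, and let T ∈ (0, 1]. Suppose φ : [0, T) → ℝ is continuous on [0, T), continuously differentiable on (0, T), and satisfies φ'(t) ≥ d₁ φ(t)² - d₂ for all t ∈ (0, T) and φ(0) ≥ d₃ + 2/d₁. Then T ≤ 1/2. -/

import Mathlib

/-!
Put `d₃ = √(d₂ / d₁)`, so that `d₂ ≤ d₁ d₃²`. The level `d₃ + 1/d₁` lies below `φ 0` and `φ` is
strictly increasing whenever it reaches it, so `φ - d₃` stays above `1/d₁`. There the equation gives
the Riccati inequality `(φ - d₃)' ≥ d₁ (φ - d₃)²`, under which `1/(φ - d₃) + d₁ t` decreases;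
hence `d₁ t < 1/(φ 0 - d₃) ≤ d₁/2` on the whole existence interval.
-/

open Set

theorem const_le_image_of_deriv_pos_boundary {f f' : ℝ → ℝ} {a b c : ℝ}
    (hf : ContinuousOn f (Icc a b)) (hderiv : ∀ x ∈ Ioo a b, HasDerivAt f (f' x) x)
    (ha : c < f a) (bound : ∀ x ∈ Ioo a b, f x = c → 0 < f' x) :
    ∀ x ∈ Icc a b, c ≤ f x := by
  rintro x ⟨hax, hxb⟩
  rcases hax.eq_or_lt with rfl | hax
  · exact ha.le
  -- The fencing theorem needs derivatives at the left endpoint, so start slightly to the right of `a`.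
  have hlim : ∀ᶠ y in nhdsWithin a (Ioi a), c < f y ∧ y ∈ Ioo a x := by
    have hcont : ContinuousWithinAt f (Ioi a) a :=
      ((hf a (left_mem_Icc.2 (hax.le.trans hxb))).mono Ioo_subset_Icc_self).mono_of_mem_nhdsWithin
        (Ioo_mem_nhdsGT (hax.trans_le hxb))
    exact (hcont.eventually (lt_mem_nhds ha)).and (Ioo_mem_nhdsGT_of_mem ⟨le_rfl, hax⟩)
  obtain ⟨s, hcs, has, hsx⟩ := hlim.exists
  have hsub : Ico s x ⊆ Ioo a b := fun y hy => ⟨has.trans_le hy.1, hy.2.trans_le hxb⟩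
  have hfence := image_le_of_deriv_right_lt_deriv_boundary' (f := fun y => -f y)
    (f' := fun y => -f' y) (B := fun _ => -c) (B' := fun _ => 0)
    (hf.mono (Icc_subset_Icc has.le hxb)).neg
    (fun y hy => (hderiv y (hsub hy)).neg.hasDerivWithinAt)
    (neg_le_neg hcs.le) continuousOn_const (fun y _ => hasDerivWithinAt_const y _ _)
    (fun y hy hfy => neg_neg_of_pos (bound y (hsub hy) (neg_inj.1 hfy)))
    (right_mem_Icc.2 hsx.le)
  exact neg_le_neg_iff.1 hfence

theorem mul_sub_lt_inv_of_mul_sq_le_deriv {g g' : ℝ → ℝ} {a b k : ℝ} (hab : a ≤ b)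
    (hg : ContinuousOn g (Icc a b)) (hderiv : ∀ x ∈ Ioo a b, HasDerivAt g (g' x) x)
    (hpos : ∀ x ∈ Icc a b, 0 < g x) (hriccati : ∀ x ∈ Ioo a b, k * g x ^ 2 ≤ g' x) :
    k * (b - a) < (g a)⁻¹ := by
  have hderiv_inv : ∀ x ∈ Ioo a b, HasDerivAt (fun y => (g y)⁻¹ + k * y) (-g' x / g x ^ 2 + k) x :=
    fun x hx => ((hderiv x hx).inv (hpos x (Ioo_subset_Icc_self hx)).ne').add
      (by simpa using (hasDerivAt_id x).const_mul k)
  have hanti : AntitoneOn (fun y => (g y)⁻¹ + k * y) (Icc a b) := by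
    refine antitoneOn_of_deriv_nonpos (convex_Icc a b)
      ((hg.inv₀ fun x hx => (hpos x hx).ne').add (continuousOn_const.mul continuousOn_id)) ?_ ?_
    · rw [interior_Icc]
      exact fun x hx => (hderiv_inv x hx).differentiableAt.differentiableWithinAt
    · rw [interior_Icc]
      intro x hx
      have hsq : 0 < g x ^ 2 := pow_pos (hpos x (Ioo_subset_Icc_self hx)) 2
      rw [(hderiv_inv x hx).deriv, neg_div, neg_add_nonpos_iff, le_div_iff₀ hsq]
      exact hriccati x hx
  have hend := hanti (left_mem_Icc.2 hab) (right_mem_Icc.2 hab) hab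
  have hb : 0 < (g b)⁻¹ := inv_pos.2 (hpos b (right_mem_Icc.2 hab))
  simp only at hend
  linarith

theorem le_mul_sq_sqrt_div {a b : ℝ} (ha : 0 < a) : b ≤ a * Real.sqrt (b / a) ^ 2 := by
  rw [Real.sq_sqrt', ← div_le_iff₀' ha]
  exact le_max_left _ _

theorem sub_sq_le_sq_sub_sq {x d : ℝ} (hd : 0 ≤ d) (hdx : d ≤ x) : (x - d) ^ 2 ≤ x ^ 2 - d ^ 2 := by
  nlinarith

theorem stmt8_general (d₁ d₂ T : ℝ) (hd₁ : 0 < d₁)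
    (φ φ' : ℝ → ℝ)
    (hcont : ContinuousOn φ (Ico 0 T))
    (hderiv : ∀ t ∈ Ioo 0 T, HasDerivAt φ (φ' t) t)
    (hode : ∀ t ∈ Ioo 0 T, φ' t ≥ d₁ * (φ t) ^ 2 - d₂)
    (hinit : φ 0 ≥ Real.sqrt (d₂ / d₁) + 2 / d₁) :
    T ≤ 1 / 2 := by
  set d₃ := Real.sqrt (d₂ / d₁)
  have hd₃ : 0 ≤ d₃ := Real.sqrt_nonneg _
  have hd₂ : d₂ ≤ d₁ * d₃ ^ 2 := le_mul_sq_sqrt_div hd₁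
  have hd₁inv : 0 < d₁⁻¹ := inv_pos.2 hd₁
  by_contra! hT
  obtain ⟨t, ht, htT⟩ := exists_between hT
  have hsub : Ioo 0 t ⊆ Ioo 0 T := Ioo_subset_Ioo_right htT.le
  have hcont_t : ContinuousOn φ (Icc 0 t) := hcont.mono fun x hx => ⟨hx.1, hx.2.trans_lt htT⟩
  have hlevel : ∀ x ∈ Icc 0 t, d₃ + d₁⁻¹ ≤ φ x := by
    refine const_le_image_of_deriv_pos_boundary hcont_t (fun x hx => hderiv x (hsub hx)) ?_
      fun x hx hx_eq => ?_
    · rw [div_eq_mul_inv] at hinit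
      linarith
    · have : d₁ * d₃ ^ 2 < d₁ * φ x ^ 2 := by
        rw [hx_eq]
        gcongr
        linarith
      linarith [hode x (hsub hx)]
  have hriccati : ∀ x ∈ Ioo 0 t, d₁ * (φ x - d₃) ^ 2 ≤ φ' x := fun x hx => calc
    d₁ * (φ x - d₃) ^ 2 ≤ d₁ * (φ x ^ 2 - d₃ ^ 2) := by
      gcongr
      exact sub_sq_le_sq_sub_sq hd₃ (by linarith [hlevel x (Ioo_subset_Icc_self hx)])
    _ ≤ φ' x := by linarith [hode x (hsub hx)]
  have hblowup := mul_sub_lt_inv_of_mul_sq_le_deriv (g := fun x => φ x - d₃) (by linarith)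
    (hcont_t.sub continuousOn_const) (fun x hx => (hderiv x (hsub hx)).sub_const d₃)
    (fun x hx => by linarith [hlevel x hx]) hriccati
  have hinit_inv : (φ 0 - d₃)⁻¹ ≤ d₁ / 2 := by
    rw [← inv_div]
    exact inv_anti₀ (by positivity) (by linarith)
  linarith [mul_lt_mul_of_pos_left ht hd₁]

theorem stmt8 (d₁ d₂ T : ℝ) (hd₁ : 0 < d₁) (hd₂ : 0 < d₂) (hT : T ∈ Ioc (0:ℝ) 1)
    (φ φ' : ℝ → ℝ)
    (hcont : ContinuousOn φ (Ico 0 T))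
    (hderiv : ∀ t ∈ Ioo 0 T, HasDerivAt φ (φ' t) t)
    (hφ'cont : ContinuousOn φ' (Ioo 0 T))
    (hode : ∀ t ∈ Ioo 0 T, φ' t ≥ d₁ * (φ t) ^ 2 - d₂)
    (hinit : φ 0 ≥ Real.sqrt (d₂ / d₁) + 2 / d₁) :
    T ≤ 1 / 2 :=
  stmt8_general d₁ d₂ T hd₁ φ φ' hcont hderiv hode hinit
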